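/- The functions I₀(h), h·I₀(h), I₁(h), I₂(h) are linearly independent on (−1/4, 0): if c₀, c₁, c₂, c₃ are real numbers such that c₀·I₀(h) + c₁·h·I₀(h) + c₂·I₁(h) + c₃·I₂(h) = 0 for all h ∈ (−1/4, 0), then c₀ = c₁ = c₂ = c₃ = 0. -/

import Mathlib

open MeasureTheory

/-- Left endpoint `x₁(h) = √(1 − √(1+4h))` of the interior oval of the Duffing Hamiltonian
`H(x,y) = y²/2 − x²/2 + x⁴/4`. -/
noncomputable def x1 (h : ℝ) : ℝ := Real.sqrt (1 - Real.sqrt (1 + 4*h))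

/-- Right endpoint `x₂(h) = √(1 + √(1+4h))` of the interior oval. -/
noncomputable def x2 (h : ℝ) : ℝ := Real.sqrt (1 + Real.sqrt (1 + 4*h))

/-- The interior Abelian integrals `I_i(h) = 2∫_{x₁(h)}^{x₂(h)} xⁱ √(2h + x² − x⁴/2) dx`. -/
noncomputable def Iint (i : ℕ) (h : ℝ) : ℝ :=
  2 * ∫ x in x1 h..x2 h, x ^ i * Real.sqrt (2*h + x^2 - x^4/2)

open Real

lemma Iint_subst (i : ℕ) (s : ℝ) (hs0 : 0 < s) (hs1 : s < 1) :
    Iint i ((s^2 - 1)/4) = (s^2 / Real.sqrt 2) *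
      ∫ θ in (-(π/2))..(π/2),
        Real.cos θ^2 * (Real.sqrt (1 + s * Real.sin θ))^i / Real.sqrt (1 + s * Real.sin θ) := by
  have hw : ∀ θ : ℝ, 0 < 1 + s * Real.sin θ := by
    intro θ
    nlinarith [Real.neg_one_le_sin θ, Real.sin_le_one θ]
  set f : ℝ → ℝ := fun θ => Real.sqrt (1 + s * Real.sin θ) with hf
  set f' : ℝ → ℝ := fun θ => (s * Real.cos θ) / (2 * Real.sqrt (1 + s * Real.sin θ)) with hf'
  have hderiv : ∀ θ ∈ Set.uIcc (-(π/2)) (π/2), HasDerivAt f (f' θ) θ := by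
    intro θ _
    have h1 : HasDerivAt (fun θ : ℝ => 1 + s * Real.sin θ) (s * Real.cos θ) θ :=
      ((Real.hasDerivAt_sin θ).const_mul s).const_add 1
    exact h1.sqrt (ne_of_gt (hw θ))
  have hcont' : ContinuousOn f' (Set.uIcc (-(π/2)) (π/2)) := by
    apply Continuous.continuousOn
    apply Continuous.div (by continuity) (by continuity)
    exact fun θ => ne_of_gt (mul_pos two_pos (Real.sqrt_pos.mpr (hw θ)))
  have hg : Continuous (fun x : ℝ => x ^ i * Real.sqrt (2*((s^2-1)/4) + x^2 - x^4/2)) := by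
    continuity
  have key := intervalIntegral.integral_comp_smul_deriv hderiv hcont' hg
  have hs2 : Real.sqrt (1 + 4*((s^2-1)/4)) = s := by
    have : 1 + 4*((s^2-1)/4) = s^2 := by ring
    rw [this, Real.sqrt_sq hs0.le]
  have hx1 : x1 ((s^2-1)/4) = f (-(π/2)) := by
    simp only [x1, hf, hs2, Real.sin_neg, Real.sin_pi_div_two]
    ring_nf
  have hx2 : x2 ((s^2-1)/4) = f (π/2) := by
    simp only [x2, hf, hs2, Real.sin_pi_div_two, mul_one]
  rw [Iint, hx1, hx2, ← key]
  rw [← intervalIntegral.integral_const_mul, ← intervalIntegral.integral_const_mul]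
  apply intervalIntegral.integral_congr
  intro θ hθ
  have hcos : 0 ≤ Real.cos θ := by
    rw [Set.uIcc_of_le (by linarith [Real.pi_pos] : -(π/2) ≤ π/2)] at hθ
    exact Real.cos_nonneg_of_mem_Icc ⟨hθ.1, hθ.2⟩
  have hwθ := hw θ
  have hsq : f θ ^ 2 = 1 + s * Real.sin θ := Real.sq_sqrt hwθ.le
  have harg : 2*((s^2-1)/4) + (f θ)^2 - (f θ)^4/2 = (s * Real.cos θ)^2 / 2 := by
    have hpyth := Real.sin_sq_add_cos_sq θ
    have h4 : (f θ)^4 = (1 + s * Real.sin θ)^2 := by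
      rw [show (f θ)^4 = ((f θ)^2)^2 by ring, hsq]
    rw [hsq, h4]
    nlinarith [hpyth]
  have hsqrt_arg : Real.sqrt (2*((s^2-1)/4) + (f θ)^2 - (f θ)^4/2) = s * Real.cos θ / Real.sqrt 2 := by
    rw [harg, show (s * Real.cos θ)^2 / 2 = (s * Real.cos θ)^2 / 2 from rfl]
    rw [Real.sqrt_div (sq_nonneg _), Real.sqrt_sq (by positivity)]
  simp only [smul_eq_mul, Function.comp]
  rw [hsqrt_arg, hf']
  have hfpos : 0 < Real.sqrt (1 + s * Real.sin θ) := Real.sqrt_pos.mpr hwθ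
  have h2pos : (0:ℝ) < Real.sqrt 2 := Real.sqrt_pos.mpr (by norm_num)
  simp only [hf]
  field_simp

lemma integral_cos2_poly (φ : ℝ → ℝ) (hφ : Continuous φ)
    (g0 g1 g2 g3 g4 g5 g6 g7 α : ℝ)
    (hid : ∀ x c : ℝ, x^2 + c^2 = 1 →
      α + (-x * (g0 + g1*x + g2*x^2 + g3*x^3 + g4*x^4 + g5*x^5 + g6*x^6 + g7*x^7)
        + c * ((g1 + 2*g2*x + 3*g3*x^2 + 4*g4*x^3 + 5*g5*x^4 + 6*g6*x^5 + 7*g7*x^6) * c))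
      = c^2 * φ x) :
    ∫ θ in (-(π/2))..(π/2), Real.cos θ^2 * φ (Real.sin θ) = α * π := by
  have hint : ∀ θ ∈ Set.uIcc (-(π/2)) (π/2),
      HasDerivAt (fun θ : ℝ => α * θ + Real.cos θ *
        (g0 + g1*Real.sin θ + g2*Real.sin θ^2 + g3*Real.sin θ^3 + g4*Real.sin θ^4
          + g5*Real.sin θ^5 + g6*Real.sin θ^6 + g7*Real.sin θ^7))
        (Real.cos θ^2 * φ (Real.sin θ)) θ := by
    intro θ _
    have hsin := Real.hasDerivAt_sin θ
    have hpoly : HasDerivAt (fun x : ℝ => g0 + g1*x + g2*x^2 + g3*x^3 + g4*x^4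
        + g5*x^5 + g6*x^6 + g7*x^7)
        (g1 + 2*g2*Real.sin θ + 3*g3*Real.sin θ^2 + 4*g4*Real.sin θ^3 + 5*g5*Real.sin θ^4
          + 6*g6*Real.sin θ^5 + 7*g7*Real.sin θ^6) (Real.sin θ) := by
      have : HasDerivAt (fun x : ℝ => g0 + g1*x + g2*x^2 + g3*x^3 + g4*x^4
          + g5*x^5 + g6*x^6 + g7*x^7)
          (0 + g1*1 + g2*(2*Real.sin θ^1) + g3*(3*Real.sin θ^2) + g4*(4*Real.sin θ^3)
            + g5*(5*Real.sin θ^4) + g6*(6*Real.sin θ^5) + g7*(7*Real.sin θ^6)) (Real.sin θ) := by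
        apply HasDerivAt.add
        apply HasDerivAt.add
        apply HasDerivAt.add
        apply HasDerivAt.add
        apply HasDerivAt.add
        apply HasDerivAt.add
        · exact ((hasDerivAt_id _).const_mul g1).const_add g0 |>.congr_deriv (by ring) |>.congr_deriv rfl
        all_goals exact ((hasDerivAt_pow _ _).const_mul _)
      convert this using 1
      ring
    have hcomp : HasDerivAt (fun θ : ℝ => g0 + g1*Real.sin θ + g2*Real.sin θ^2 + g3*Real.sin θ^3
        + g4*Real.sin θ^4 + g5*Real.sin θ^5 + g6*Real.sin θ^6 + g7*Real.sin θ^7)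
        ((g1 + 2*g2*Real.sin θ + 3*g3*Real.sin θ^2 + 4*g4*Real.sin θ^3 + 5*g5*Real.sin θ^4
          + 6*g6*Real.sin θ^5 + 7*g7*Real.sin θ^6) * Real.cos θ) θ :=
      HasDerivAt.comp θ hpoly hsin
    have hmul := (Real.hasDerivAt_cos θ).mul hcomp
    have hlin : HasDerivAt (fun θ : ℝ => α * θ) α θ := by
      simpa using (hasDerivAt_id θ).const_mul α
    have := hlin.add hmul
    refine this.congr_deriv ?_
    rw [← hid (Real.sin θ) (Real.cos θ) (Real.sin_sq_add_cos_sq θ)]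
  have hInt : IntervalIntegrable (fun θ : ℝ => Real.cos θ^2 * φ (Real.sin θ)) volume (-(π/2)) (π/2) := by
    apply Continuous.intervalIntegrable
    continuity
  have := intervalIntegral.integral_eq_sub_of_hasDerivAt hint hInt
  rw [this]
  simp [Real.cos_pi_div_two, Real.cos_neg]
  ring

noncomputable def Ppoly (t : ℝ) : ℝ := 1 - t/2 + 3/8*t^2 - 5/16*t^3 + 35/128*t^4 - 63/256*t^5 + 231/1024*t^6
noncomputable def Qpoly (t : ℝ) : ℝ := 1 + t/2 - 1/8*t^2 + 1/16*t^3 - 5/128*t^4 + 7/256*t^5 - 21/1024*t^6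

lemma wallis0 : ∫ θ in (-(π/2))..(π/2), Real.cos θ^2 * (1:ℝ) = (1/2) * π := by
  have := integral_cos2_poly (fun _ => (1:ℝ)) continuous_const
    0 (1/2) 0 0 0 0 0 0 (1/2)
    (by intro x c h; linear_combination (-1/2 : ℝ) * h)
  simpa using this

lemma integral_P (s : ℝ) :
    ∫ θ in (-(π/2))..(π/2), Real.cos θ^2 * Ppoly (s * Real.sin θ)
      = (1/2 + 3/64*s^2 + 35/2048*s^4 + 1155/131072*s^6) * π := by
  have := integral_cos2_poly (fun x => Ppoly (s*x)) (by unfold Ppoly; continuity)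
    (3/160*s^5 + 1/24*s^3 + 1/6*s)
    (-(1155/131072)*s^6 - 35/2048*s^4 - 3/64*s^2 + 1/2)
    (3/320*s^5 + 1/48*s^3 - 1/6*s)
    (-(385/65536)*s^6 - 35/3072*s^4 + 3/32*s^2)
    (9/1280*s^5 - 1/16*s^3)
    (-(77/16384)*s^6 + 35/768*s^4)
    (-(9/256)*s^5)
    (231/8192*s^6)
    (1155/131072*s^6 + 35/2048*s^4 + 3/64*s^2 + 1/2)
    ?_
  · convert this using 2 <;> ring
  intro x c h
  unfold Ppoly
  linear_combination ((-(1155/131072)*s^6 - 35/2048*s^4 - 3/64*s^2 + 1/2)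
    + 2*(3/320*s^5 + 1/48*s^3 - 1/6*s)*x
    + 3*(-(385/65536)*s^6 - 35/3072*s^4 + 3/32*s^2)*x^2
    + 4*(9/1280*s^5 - 1/16*s^3)*x^3
    + 5*(-(77/16384)*s^6 + 35/768*s^4)*x^4
    + 6*(-(9/256)*s^5)*x^5
    + 7*(231/8192*s^6)*x^6
    - (1 - (s*x)/2 + 3/8*(s*x)^2 - 5/16*(s*x)^3 + 35/128*(s*x)^4 - 63/256*(s*x)^5 + 231/1024*(s*x)^6)) * h

lemma integral_Q (s : ℝ) :
    ∫ θ in (-(π/2))..(π/2), Real.cos θ^2 * Qpoly (s * Real.sin θ)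
      = (1/2 - 1/64*s^2 - 5/2048*s^4 - 105/131072*s^6) * π := by
  have := integral_cos2_poly (fun x => Qpoly (s*x)) (by unfold Qpoly; continuity)
    (-(1/480)*s^5 - 1/120*s^3 - 1/6*s)
    (105/131072*s^6 + 5/2048*s^4 + 1/64*s^2 + 1/2)
    (-(1/960)*s^5 - 1/240*s^3 + 1/6*s)
    (35/65536*s^6 + 5/3072*s^4 - 1/32*s^2)
    (-(1/1280)*s^5 + 1/80*s^3)
    (7/16384*s^6 - 5/768*s^4)
    (1/256*s^5)
    (-(21/8192)*s^6)
    (-(105/131072)*s^6 - 5/2048*s^4 - 1/64*s^2 + 1/2)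
    ?_
  · convert this using 2 <;> ring
  intro x c h
  unfold Qpoly
  linear_combination ((105/131072*s^6 + 5/2048*s^4 + 1/64*s^2 + 1/2)
    + 2*(-(1/960)*s^5 - 1/240*s^3 + 1/6*s)*x
    + 3*(35/65536*s^6 + 5/3072*s^4 - 1/32*s^2)*x^2
    + 4*(-(1/1280)*s^5 + 1/80*s^3)*x^3
    + 5*(7/16384*s^6 - 5/768*s^4)*x^4
    + 6*(1/256*s^5)*x^5
    + 7*(-(21/8192)*s^6)*x^6
    - (1 + (s*x)/2 - 1/8*(s*x)^2 + 1/16*(s*x)^3 - 5/128*(s*x)^4 + 7/256*(s*x)^5 - 21/1024*(s*x)^6)) * h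

lemma abs_poly6_le (t c0 c1 c2 c3 c4 c5 c6 : ℝ) (ht : |t| ≤ 1) :
    |c0 + c1*t + c2*t^2 + c3*t^3 + c4*t^4 + c5*t^5 + c6*t^6|
      ≤ |c0| + |c1| + |c2| + |c3| + |c4| + |c5| + |c6| := by
  have hk : ∀ k : ℕ, |t| ^ k ≤ 1 := fun k => pow_le_one₀ (abs_nonneg t) ht
  have hterm : ∀ (c : ℝ) (k : ℕ), |c * t^k| ≤ |c| := fun c k => by
    rw [abs_mul, abs_pow]; exact mul_le_of_le_one_right (abs_nonneg c) (hk k)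
  calc |c0 + c1*t + c2*t^2 + c3*t^3 + c4*t^4 + c5*t^5 + c6*t^6|
      ≤ |c0 + c1*t + c2*t^2 + c3*t^3 + c4*t^4 + c5*t^5| + |c6*t^6| := abs_add_le _ _
    _ ≤ (|c0 + c1*t + c2*t^2 + c3*t^3 + c4*t^4| + |c5*t^5|) + |c6*t^6| := by
        gcongr; exact abs_add_le _ _
    _ ≤ ((|c0 + c1*t + c2*t^2 + c3*t^3| + |c4*t^4|) + |c5*t^5|) + |c6*t^6| := by
        gcongr; exact abs_add_le _ _
    _ ≤ (((|c0 + c1*t + c2*t^2| + |c3*t^3|) + |c4*t^4|) + |c5*t^5|) + |c6*t^6| := by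
        gcongr; exact abs_add_le _ _
    _ ≤ ((((|c0 + c1*t| + |c2*t^2|) + |c3*t^3|) + |c4*t^4|) + |c5*t^5|) + |c6*t^6| := by
        gcongr; exact abs_add_le _ _
    _ ≤ (((((|c0| + |c1*t|) + |c2*t^2|) + |c3*t^3|) + |c4*t^4|) + |c5*t^5|) + |c6*t^6| := by
        gcongr
        · exact abs_add_le _ _
    _ ≤ |c0| + |c1| + |c2| + |c3| + |c4| + |c5| + |c6| := by
        have h1 := hterm c1 1
        rw [pow_one] at h1
        have := hterm c2 2; have := hterm c3 3; have := hterm c4 4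
        have := hterm c5 5; have := hterm c6 6
        linarith

lemma abs_poly6_le' (t c1 c2 c3 c4 c5 c6 : ℝ) (ht : |t| ≤ 1) :
    |c1*t + c2*t^2 + c3*t^3 + c4*t^4 + c5*t^5 + c6*t^6|
      ≤ (|c1| + |c2| + |c3| + |c4| + |c5| + |c6|) * |t| := by
  have he : c1*t + c2*t^2 + c3*t^3 + c4*t^4 + c5*t^5 + c6*t^6
      = t * (c1 + c2*t + c3*t^2 + c4*t^3 + c5*t^4 + c6*t^5) := by ring
  rw [he, abs_mul, mul_comm]
  have := abs_poly6_le t c1 c2 c3 c4 c5 c6 0 ht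
  gcongr
  calc |c1 + c2*t + c3*t^2 + c4*t^3 + c5*t^4 + c6*t^5|
      = |c1 + c2*t + c3*t^2 + c4*t^3 + c5*t^4 + c6*t^5 + 0*t^6| := by ring_nf
    _ ≤ |c1| + |c2| + |c3| + |c4| + |c5| + |c6| + |(0:ℝ)| := abs_poly6_le t c1 c2 c3 c4 c5 c6 0 ht
    _ = |c1| + |c2| + |c3| + |c4| + |c5| + |c6| := by simp

lemma Qpoly_err (t : ℝ) (ht : |t| ≤ 1/2) : |Real.sqrt (1+t) - Qpoly t| ≤ |t|^7 := by
  obtain ⟨ht1, ht2⟩ := abs_le.mp ht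
  have ht' : |t| ≤ 1 := by linarith [abs_nonneg t]
  have hpos : (0:ℝ) < 1 + t := by linarith
  set w := Real.sqrt (1+t) with hw
  have hw2 : w^2 = 1+t := Real.sq_sqrt hpos.le
  have hw0 : 0 ≤ w := Real.sqrt_nonneg _
  have hwge : 1/2 ≤ w := by nlinarith
  have hQ : 1/2 ≤ Qpoly t := by
    have h1 : |Qpoly t - 1| ≤ (|(1:ℝ)/2| + |-(1:ℝ)/8| + |(1:ℝ)/16| + |-(5:ℝ)/128| + |(7:ℝ)/256| + |-(21:ℝ)/1024|) * |t| := by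
      have he : Qpoly t - 1 = (1/2)*t + (-(1:ℝ)/8)*t^2 + (1/16)*t^3 + (-(5:ℝ)/128)*t^4 + (7/256)*t^5 + (-(21:ℝ)/1024)*t^6 := by
        unfold Qpoly; ring
      rw [he]
      exact abs_poly6_le' t _ _ _ _ _ _ ht'
    rw [abs_le] at h1
    have : (|(1:ℝ)/2| + |-(1:ℝ)/8| + |(1:ℝ)/16| + |-(5:ℝ)/128| + |(7:ℝ)/256| + |-(21:ℝ)/1024|) = 793/1024 := by
      norm_num [abs_of_nonneg, abs_of_nonpos, abs_div, abs_neg]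
    rw [this] at h1
    nlinarith [abs_nonneg t, h1.1]
  have hsum : 1 ≤ w + Qpoly t := by linarith
  set Z : ℝ := -(33/1024) + 165/16384*t - 77/16384*t^2 + 77/32768*t^3 - 147/131072*t^4 + 441/1048576*t^5 with hZdef
  have key : (w - Qpoly t) * (w + Qpoly t) = -(t^7 * Z) := by
    unfold Qpoly
    rw [hZdef]
    linear_combination hw2
  have hZ : |Z| ≤ 1 := by
    have he : Z = -(33/1024) + (165/16384)*t + (-(77:ℝ)/16384)*t^2 + (77/32768)*t^3 + (-(147:ℝ)/131072)*t^4 + (441/1048576)*t^5 + 0*t^6 := by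
      rw [hZdef]; ring
    rw [he]
    calc _ ≤ |-(33:ℝ)/1024| + |(165:ℝ)/16384| + |(-(77:ℝ)/16384)| + |(77:ℝ)/32768| + |(-(147:ℝ)/131072)| + |(441:ℝ)/1048576| + |(0:ℝ)| := by
          have := abs_poly6_le t (-(33/1024)) (165/16384) (-(77:ℝ)/16384) (77/32768) (-(147:ℝ)/131072) (441/1048576) 0 ht'
          convert this using 2 <;> norm_num
      _ ≤ 1 := by norm_num [abs_of_nonneg]
  have h1 : |w - Qpoly t| * 1 ≤ |w - Qpoly t| * (w + Qpoly t) :=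
    mul_le_mul_of_nonneg_left hsum (abs_nonneg _)
  have h2 : |w - Qpoly t| * (w + Qpoly t) = |t|^7 * |Z| := by
    rw [← abs_of_pos (show (0:ℝ) < w + Qpoly t by linarith), ← abs_mul, key, abs_neg, abs_mul, abs_pow]
  have h3 : |t|^7 * |Z| ≤ |t|^7 * 1 := mul_le_mul_of_nonneg_left hZ (by positivity)
  calc |Real.sqrt (1+t) - Qpoly t| = |w - Qpoly t| * 1 := by rw [mul_one]
    _ ≤ |t|^7 * 1 := by rw [h2] at h1; linarith
    _ = |t|^7 := by rw [mul_one]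

lemma Ppoly_err (t : ℝ) (ht : |t| ≤ 1/2) : |1 / Real.sqrt (1+t) - Ppoly t| ≤ 2 * |t|^7 := by
  obtain ⟨ht1, ht2⟩ := abs_le.mp ht
  have ht' : |t| ≤ 1 := by linarith [abs_nonneg t]
  have hpos : (0:ℝ) < 1 + t := by linarith
  set w := Real.sqrt (1+t) with hw
  have hw2 : w^2 = 1+t := Real.sq_sqrt hpos.le
  have hw0 : 0 ≤ w := Real.sqrt_nonneg _
  have hwge : 1/2 ≤ w := by nlinarith
  have hwpos : 0 < w := by linarith
  have hP : 0 ≤ Ppoly t := by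
    have h1 : |Ppoly t - 1| ≤ (|-(1:ℝ)/2| + |(3:ℝ)/8| + |-(5:ℝ)/16| + |(35:ℝ)/128| + |-(63:ℝ)/256| + |(231:ℝ)/1024|) * |t| := by
      have he : Ppoly t - 1 = (-(1:ℝ)/2)*t + (3/8)*t^2 + (-(5:ℝ)/16)*t^3 + (35/128)*t^4 + (-(63:ℝ)/256)*t^5 + (231/1024)*t^6 := by
        unfold Ppoly; ring
      rw [he]
      exact abs_poly6_le' t _ _ _ _ _ _ ht'
    rw [abs_le] at h1
    have : (|-(1:ℝ)/2| + |(3:ℝ)/8| + |-(5:ℝ)/16| + |(35:ℝ)/128| + |-(63:ℝ)/256| + |(231:ℝ)/1024|) = 1979/1024 := by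
      norm_num [abs_of_nonneg, abs_of_nonpos, abs_div, abs_neg]
    rw [this] at h1
    nlinarith [abs_nonneg t, h1.1]
  have hPw : 1 ≤ 1 + w * Ppoly t := by nlinarith
  set Z : ℝ := 429/1024 - 3003/16384*t + 1001/8192*t^2 - 3003/32768*t^3 + 9555/131072*t^4 - 63063/1048576*t^5 + 53361/1048576*t^6 with hZdef
  have key : (1 - w * Ppoly t) * (1 + w * Ppoly t) = -(t^7 * Z) := by
    unfold Ppoly
    rw [hZdef]
    linear_combination (-(1 - t/2 + 3/8*t^2 - 5/16*t^3 + 35/128*t^4 - 63/256*t^5 + 231/1024*t^6)^2) * hw2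
  have hZ : |Z| ≤ 1 := by
    have he : Z = 429/1024 + (-(3003:ℝ)/16384)*t + (1001/8192)*t^2 + (-(3003:ℝ)/32768)*t^3 + (9555/131072)*t^4 + (-(63063:ℝ)/1048576)*t^5 + (53361/1048576)*t^6 := by
      rw [hZdef]; ring
    rw [he]
    calc _ ≤ |(429:ℝ)/1024| + |(-(3003:ℝ)/16384)| + |(1001:ℝ)/8192| + |(-(3003:ℝ)/32768)| + |(9555:ℝ)/131072| + |(-(63063:ℝ)/1048576)| + |(53361:ℝ)/1048576| :=
          abs_poly6_le t _ _ _ _ _ _ _ ht'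
      _ ≤ 1 := by norm_num [abs_of_nonneg]
  have h1 : |1 - w * Ppoly t| * 1 ≤ |1 - w * Ppoly t| * (1 + w * Ppoly t) :=
    mul_le_mul_of_nonneg_left hPw (abs_nonneg _)
  have h2 : |1 - w * Ppoly t| * (1 + w * Ppoly t) = |t|^7 * |Z| := by
    rw [← abs_of_pos (show (0:ℝ) < 1 + w * Ppoly t by linarith), ← abs_mul, key, abs_neg, abs_mul, abs_pow]
  have h3 : |1 - w * Ppoly t| ≤ |t|^7 := by
    rw [h2] at h1
    have := mul_le_mul_of_nonneg_left hZ (show (0:ℝ) ≤ |t|^7 by positivity)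
    linarith [mul_one (|t|^7)]
  have e1 : 1 / w - Ppoly t = (1 - w * Ppoly t) / w := by field_simp
  rw [e1, abs_div, abs_of_pos hwpos, div_le_iff₀ hwpos]
  nlinarith [abs_nonneg (1 - w * Ppoly t), pow_nonneg (abs_nonneg t) 7]

lemma G_approx (s : ℝ) (hs0 : 0 < s) (hs : s ≤ 1/2) :
    |(∫ θ in (-(π/2))..(π/2), Real.cos θ^2 / Real.sqrt (1 + s * Real.sin θ))
      - (1/2 + 3/64*s^2 + 35/2048*s^4 + 1155/131072*s^6) * π| ≤ 7 * s^7 := by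
  have hw : ∀ θ : ℝ, 0 < 1 + s * Real.sin θ := fun θ => by
    nlinarith [Real.neg_one_le_sin θ, Real.sin_le_one θ]
  have hint1 : IntervalIntegrable (fun θ : ℝ => Real.cos θ^2 / Real.sqrt (1 + s*Real.sin θ))
      volume (-(π/2)) (π/2) := by
    apply Continuous.intervalIntegrable
    apply Continuous.div (by continuity) (by continuity)
    exact fun θ => ne_of_gt (Real.sqrt_pos.mpr (hw θ))
  have hint2 : IntervalIntegrable (fun θ : ℝ => Real.cos θ^2 * Ppoly (s*Real.sin θ))
      volume (-(π/2)) (π/2) := by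
    apply Continuous.intervalIntegrable; unfold Ppoly; continuity
  rw [← integral_P s, ← intervalIntegral.integral_sub hint1 hint2]
  have hb := intervalIntegral.norm_integral_le_of_norm_le_const (C := 2*s^7)
    (f := fun θ => Real.cos θ^2 / Real.sqrt (1+s*Real.sin θ) - Real.cos θ^2 * Ppoly (s*Real.sin θ))
    (a := -(π/2)) (b := π/2) ?_
  · rw [Real.norm_eq_abs] at hb
    have : |π/2 - (-(π/2))| = π := by
      rw [abs_of_pos (by linarith [Real.pi_pos])]; ring
    rw [this] at hb
    nlinarith [Real.pi_lt_d2, pow_pos hs0 7]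
  · intro θ _
    have hsin : |Real.sin θ| ≤ 1 := Real.abs_sin_le_one θ
    have ht : |s * Real.sin θ| ≤ 1/2 := by
      rw [abs_mul, abs_of_pos hs0]
      nlinarith [abs_nonneg (Real.sin θ)]
    have herr := Ppoly_err (s*Real.sin θ) ht
    have he : Real.cos θ^2 / Real.sqrt (1+s*Real.sin θ) - Real.cos θ^2 * Ppoly (s*Real.sin θ)
        = Real.cos θ^2 * (1/Real.sqrt (1+s*Real.sin θ) - Ppoly (s*Real.sin θ)) := by ring
    rw [he, Real.norm_eq_abs, abs_mul]
    have h1 : |Real.cos θ^2| ≤ 1 := by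
      rw [abs_of_nonneg (sq_nonneg _)]; exact Real.cos_sq_le_one θ
    have h2 : |s * Real.sin θ|^7 ≤ s^7 := by
      apply pow_le_pow_left₀ (abs_nonneg _)
      rw [abs_mul, abs_of_pos hs0]
      nlinarith [abs_nonneg (Real.sin θ)]
    have h3 : |1/Real.sqrt (1+s*Real.sin θ) - Ppoly (s*Real.sin θ)| ≤ 2*s^7 := by linarith
    calc |Real.cos θ^2| * |1/Real.sqrt (1+s*Real.sin θ) - Ppoly (s*Real.sin θ)|
        ≤ 1 * (2*s^7) := mul_le_mul h1 h3 (abs_nonneg _) (by norm_num)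
      _ = 2*s^7 := by ring

lemma F_approx (s : ℝ) (hs0 : 0 < s) (hs : s ≤ 1/2) :
    |(∫ θ in (-(π/2))..(π/2), Real.cos θ^2 * Real.sqrt (1 + s * Real.sin θ))
      - (1/2 - 1/64*s^2 - 5/2048*s^4 - 105/131072*s^6) * π| ≤ 4 * s^7 := by
  have hint1 : IntervalIntegrable (fun θ : ℝ => Real.cos θ^2 * Real.sqrt (1 + s*Real.sin θ))
      volume (-(π/2)) (π/2) := by
    apply Continuous.intervalIntegrable; continuity
  have hint2 : IntervalIntegrable (fun θ : ℝ => Real.cos θ^2 * Qpoly (s*Real.sin θ))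
      volume (-(π/2)) (π/2) := by
    apply Continuous.intervalIntegrable; unfold Qpoly; continuity
  rw [← integral_Q s, ← intervalIntegral.integral_sub hint1 hint2]
  have hb := intervalIntegral.norm_integral_le_of_norm_le_const (C := s^7)
    (f := fun θ => Real.cos θ^2 * Real.sqrt (1+s*Real.sin θ) - Real.cos θ^2 * Qpoly (s*Real.sin θ))
    (a := -(π/2)) (b := π/2) ?_
  · rw [Real.norm_eq_abs] at hb
    have : |π/2 - (-(π/2))| = π := by
      rw [abs_of_pos (by linarith [Real.pi_pos])]; ring
    rw [this] at hb
    nlinarith [Real.pi_lt_d2, pow_pos hs0 7]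
  · intro θ _
    have hsin : |Real.sin θ| ≤ 1 := Real.abs_sin_le_one θ
    have ht : |s * Real.sin θ| ≤ 1/2 := by
      rw [abs_mul, abs_of_pos hs0]
      nlinarith [abs_nonneg (Real.sin θ)]
    have herr := Qpoly_err (s*Real.sin θ) ht
    have he : Real.cos θ^2 * Real.sqrt (1+s*Real.sin θ) - Real.cos θ^2 * Qpoly (s*Real.sin θ)
        = Real.cos θ^2 * (Real.sqrt (1+s*Real.sin θ) - Qpoly (s*Real.sin θ)) := by ring
    rw [he, Real.norm_eq_abs, abs_mul]
    have h1 : |Real.cos θ^2| ≤ 1 := by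
      rw [abs_of_nonneg (sq_nonneg _)]; exact Real.cos_sq_le_one θ
    have h2 : |s * Real.sin θ|^7 ≤ s^7 := by
      apply pow_le_pow_left₀ (abs_nonneg _)
      rw [abs_mul, abs_of_pos hs0]
      nlinarith [abs_nonneg (Real.sin θ)]
    have h3 : |Real.sqrt (1+s*Real.sin θ) - Qpoly (s*Real.sin θ)| ≤ s^7 := by linarith
    calc |Real.cos θ^2| * |Real.sqrt (1+s*Real.sin θ) - Qpoly (s*Real.sin θ)|
        ≤ 1 * (s^7) := mul_le_mul h1 h3 (abs_nonneg _) (by norm_num)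
      _ = s^7 := by ring

lemma vanish (a C : ℝ) (h : ∀ s : ℝ, 0 < s → s ≤ 1/2 → |a| ≤ C * s) : a = 0 := by
  rcases le_or_gt C 0 with hC | hC
  · have h1 := h (1/4) (by norm_num) (by norm_num)
    have h2 : C * (1/4) ≤ 0 := by nlinarith
    exact abs_eq_zero.mp (le_antisymm (by linarith) (abs_nonneg a))
  · by_contra ha
    have h0 : 0 < |a| := abs_pos.mpr ha
    have hs0 : 0 < min (1/2) (|a|/(2*C)) := lt_min (by norm_num) (by positivity)
    have h1 := h _ hs0 (min_le_left _ _)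
    have h2 : min (1/2) (|a|/(2*C)) ≤ |a|/(2*C) := min_le_right _ _
    have h3 : C * min (1/2) (|a|/(2*C)) ≤ C * (|a|/(2*C)) := mul_le_mul_of_nonneg_left h2 hC.le
    have h4 : C * (|a|/(2*C)) = |a|/2 := by field_simp
    rw [h4] at h3
    linarith

lemma bound_term (b s : ℝ) (hs0 : 0 < s) (k : ℕ) (hk : k ≠ 0) (hs1 : s ≤ 1) :
    b*s^k ≤ |b| * s ∧ -(b*s^k) ≤ |b| * s := by
  have p : s^k ≤ s := pow_le_of_le_one hs0.le hs1 hk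
  have hp : 0 ≤ s^k := pow_nonneg hs0.le k
  have h1 : b*s^k ≤ |b| * s^k := mul_le_mul_of_nonneg_right (le_abs_self b) hp
  have h2 : |b| * s^k ≤ |b| * s := mul_le_mul_of_nonneg_left p (abs_nonneg b)
  have h3 : -(b*s^k) = (-b)*s^k := by ring
  have h4 : (-b)*s^k ≤ |b| * s^k := mul_le_mul_of_nonneg_right (neg_le_abs b) hp
  exact ⟨le_trans h1 h2, by rw [h3]; exact le_trans h4 h2⟩

lemma step (a b c d e M : ℝ) (hM : 0 ≤ M) (n : ℕ)
    (h : ∀ s : ℝ, 0 < s → s ≤ 1/2 → |a + b*s^2 + c*s^4 + d*s^6 + e*s^8| ≤ M * s^(n+2)) :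
    a = 0 ∧ ∀ s : ℝ, 0 < s → s ≤ 1/2 →
      |b + c*s^2 + d*s^4 + e*s^6 + 0*s^8| ≤ M * s^n := by
  have ha : a = 0 := by
    apply vanish a (M + |b| + |c| + |d| + |e|)
    intro s hs0 hs
    have hs1 : s ≤ 1 := by linarith
    have h1 := h s hs0 hs
    obtain ⟨hl, hr⟩ := abs_le.mp h1
    have hMs := (bound_term M s hs0 (n+2) (by omega) hs1).1
    rw [abs_of_nonneg hM] at hMs
    obtain ⟨b1, b2⟩ := bound_term b s hs0 2 (by norm_num) hs1
    obtain ⟨c1, c2⟩ := bound_term c s hs0 4 (by norm_num) hs1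
    obtain ⟨d1, d2⟩ := bound_term d s hs0 6 (by norm_num) hs1
    obtain ⟨e1, e2⟩ := bound_term e s hs0 8 (by norm_num) hs1
    rw [abs_le]
    constructor
    · have hMs2 := (bound_term M s hs0 (n+2) (by omega) hs1).2
      rw [abs_of_nonneg hM] at hMs2
      linarith
    · linarith
  refine ⟨ha, fun s hs0 hs => ?_⟩
  have h1 := h s hs0 hs
  rw [ha] at h1
  have key : 0 + b*s^2 + c*s^4 + d*s^6 + e*s^8
      = s^2 * (b + c*s^2 + d*s^4 + e*s^6 + 0*s^8) := by ring
  rw [key, abs_mul, abs_of_pos (pow_pos hs0 2)] at h1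
  have key2 : M * s^(n+2) = s^2 * (M * s^n) := by ring
  rw [key2] at h1
  exact le_of_mul_le_mul_left h1 (pow_pos hs0 2)

lemma coeffs_zero (K0 K1 K2 K3 K4 M : ℝ) (hM : 0 ≤ M)
    (h : ∀ s : ℝ, 0 < s → s ≤ 1/2 → |K0 + K1*s^2 + K2*s^4 + K3*s^6 + K4*s^8| ≤ M * s^7) :
    K0 = 0 ∧ K1 = 0 ∧ K2 = 0 ∧ K3 = 0 := by
  obtain ⟨h0, h1'⟩ := step K0 K1 K2 K3 K4 M hM 5 (fun s hs0 hs => by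
    have := h s hs0 hs; norm_num at this ⊢; convert this using 2)
  obtain ⟨h1, h2'⟩ := step K1 K2 K3 K4 0 M hM 3 h1'
  obtain ⟨h2, h3'⟩ := step K2 K3 K4 0 0 M hM 1 h2'
  have h3 : K3 = 0 := by
    apply vanish K3 (M + |K4|)
    intro s hs0 hs
    have hs1 : s ≤ 1 := by linarith
    have hh := h3' s hs0 hs
    rw [pow_one] at hh
    obtain ⟨hl, hr⟩ := abs_le.mp hh
    obtain ⟨b1, b2⟩ := bound_term K4 s hs0 2 (by norm_num) hs1
    rw [abs_le]
    constructor <;> nlinarith [abs_nonneg K4]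
  exact ⟨h0, h1, h2, h3⟩

theorem linear_independence_interior (c0 c1 c2 c3 : ℝ)
    (hc : ∀ h ∈ Set.Ioo (-(1:ℝ)/4) 0,
      c0 * Iint 0 h + c1 * h * Iint 0 h + c2 * Iint 1 h + c3 * Iint 2 h = 0) :
    c0 = 0 ∧ c1 = 0 ∧ c2 = 0 ∧ c3 = 0 := by
  have hpi := Real.pi_pos
  have hsqrt2 : (0:ℝ) < Real.sqrt 2 := Real.sqrt_pos.mpr (by norm_num)
  -- Main functional equation
  have main : ∀ s : ℝ, 0 < s → s < 1 →
      (c0 + c1*((s^2-1)/4)) * (∫ θ in (-(π/2))..(π/2), Real.cos θ^2 / Real.sqrt (1 + s*Real.sin θ))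
        + c2 * (π/2)
        + c3 * (∫ θ in (-(π/2))..(π/2), Real.cos θ^2 * Real.sqrt (1 + s*Real.sin θ)) = 0 := by
    intro s hs0 hs1
    have hw : ∀ θ : ℝ, 0 < 1 + s * Real.sin θ := fun θ => by
      nlinarith [Real.neg_one_le_sin θ, Real.sin_le_one θ]
    have hne : ∀ θ : ℝ, Real.sqrt (1 + s * Real.sin θ) ≠ 0 :=
      fun θ => ne_of_gt (Real.sqrt_pos.mpr (hw θ))
    have hh : (s^2-1)/4 ∈ Set.Ioo (-(1:ℝ)/4) 0 := by
      constructor <;> nlinarith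
    have heq := hc _ hh
    have e0 := Iint_subst 0 s hs0 hs1
    have e1 := Iint_subst 1 s hs0 hs1
    have e2 := Iint_subst 2 s hs0 hs1
    have r0 : (∫ θ in (-(π/2))..(π/2),
        Real.cos θ^2 * (Real.sqrt (1 + s*Real.sin θ))^0 / Real.sqrt (1 + s*Real.sin θ))
        = ∫ θ in (-(π/2))..(π/2), Real.cos θ^2 / Real.sqrt (1 + s*Real.sin θ) := by
      apply intervalIntegral.integral_congr
      intro θ _
      show Real.cos θ^2 * (Real.sqrt (1 + s*Real.sin θ))^0 / Real.sqrt (1 + s*Real.sin θ)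
          = Real.cos θ^2 / Real.sqrt (1 + s*Real.sin θ)
      rw [pow_zero, mul_one]
    have r1 : (∫ θ in (-(π/2))..(π/2),
        Real.cos θ^2 * (Real.sqrt (1 + s*Real.sin θ))^1 / Real.sqrt (1 + s*Real.sin θ))
        = ∫ θ in (-(π/2))..(π/2), Real.cos θ^2 * (1:ℝ) := by
      apply intervalIntegral.integral_congr
      intro θ _
      show Real.cos θ^2 * (Real.sqrt (1 + s*Real.sin θ))^1 / Real.sqrt (1 + s*Real.sin θ)
          = Real.cos θ^2 * (1:ℝ)
      rw [pow_one, mul_div_assoc, div_self (hne θ)]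
    have r2 : (∫ θ in (-(π/2))..(π/2),
        Real.cos θ^2 * (Real.sqrt (1 + s*Real.sin θ))^2 / Real.sqrt (1 + s*Real.sin θ))
        = ∫ θ in (-(π/2))..(π/2), Real.cos θ^2 * Real.sqrt (1 + s*Real.sin θ) := by
      apply intervalIntegral.integral_congr
      intro θ _
      show Real.cos θ^2 * (Real.sqrt (1 + s*Real.sin θ))^2 / Real.sqrt (1 + s*Real.sin θ)
          = Real.cos θ^2 * Real.sqrt (1 + s*Real.sin θ)
      rw [pow_two (Real.sqrt (1 + s*Real.sin θ)), mul_comm (Real.sqrt (1 + s*Real.sin θ)) (Real.sqrt (1 + s*Real.sin θ)), mul_div_assoc, mul_div_assoc, div_self (hne θ), mul_one]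
    rw [r0] at e0
    rw [r1, wallis0] at e1
    rw [r2] at e2
    rw [e0, e1, e2] at heq
    have hfac : (s^2 / Real.sqrt 2) *
        ((c0 + c1*((s^2-1)/4)) * (∫ θ in (-(π/2))..(π/2), Real.cos θ^2 / Real.sqrt (1 + s*Real.sin θ))
          + c2 * (π/2)
          + c3 * (∫ θ in (-(π/2))..(π/2), Real.cos θ^2 * Real.sqrt (1 + s*Real.sin θ))) = 0 := by
      linear_combination heq
    rcases mul_eq_zero.mp hfac with hbad | hgood
    · exfalso
      have : s^2 / Real.sqrt 2 > 0 := by positivity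
      linarith
    · exact hgood
  -- Abbreviations
  set A := c0 - c1/4 with hA
  set B := c1/4 with hB
  set M := 7*|A| + 7*|B| + 4*|c3| with hM
  have hM0 : 0 ≤ M := by positivity
  have key : ∀ s : ℝ, 0 < s → s ≤ 1/2 →
      |(A + c2 + c3)*(π/2) + ((3*A + 32*B - c3)*(π/64))*s^2
        + ((35*A + 96*B - 5*c3)*(π/2048))*s^4
        + ((1155*A + 2240*B - 105*c3)*(π/131072))*s^6
        + (B*(1155/131072)*π)*s^8| ≤ M * s^7 := by
    intro s hs0 hs
    have hs1 : s < 1 := by linarith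
    have hmain := main s hs0 hs1
    have hG := G_approx s hs0 hs
    have hF := F_approx s hs0 hs
    set Gs := ∫ θ in (-(π/2))..(π/2), Real.cos θ^2 / Real.sqrt (1 + s*Real.sin θ) with hGs
    set Fs := ∫ θ in (-(π/2))..(π/2), Real.cos θ^2 * Real.sqrt (1 + s*Real.sin θ) with hFs
    have hid : (A + c2 + c3)*(π/2) + ((3*A + 32*B - c3)*(π/64))*s^2
        + ((35*A + 96*B - 5*c3)*(π/2048))*s^4
        + ((1155*A + 2240*B - 105*c3)*(π/131072))*s^6
        + (B*(1155/131072)*π)*s^8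
        = (A + B*s^2) * ((1/2 + 3/64*s^2 + 35/2048*s^4 + 1155/131072*s^6)*π - Gs)
          + c3 * ((1/2 - 1/64*s^2 - 5/2048*s^4 - 105/131072*s^6)*π - Fs) := by
      rw [hA, hB]
      linear_combination hmain
    have habs1 : |A + B*s^2| ≤ |A| + |B| := by
      calc |A + B*s^2| ≤ |A| + |B*s^2| := abs_add_le _ _
        _ = |A| + |B| * s^2 := by rw [abs_mul, abs_pow, abs_of_pos hs0]
        _ ≤ |A| + |B| := by nlinarith [mul_nonneg (abs_nonneg B) (show (0:ℝ) ≤ 1 - s^2 by nlinarith)]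
    have hGc : |(1/2 + 3/64*s^2 + 35/2048*s^4 + 1155/131072*s^6)*π - Gs| ≤ 7*s^7 := by
      rw [abs_sub_comm]; exact hG
    have hFc : |(1/2 - 1/64*s^2 - 5/2048*s^4 - 105/131072*s^6)*π - Fs| ≤ 4*s^7 := by
      rw [abs_sub_comm]; exact hF
    calc |(A + c2 + c3)*(π/2) + ((3*A + 32*B - c3)*(π/64))*s^2
        + ((35*A + 96*B - 5*c3)*(π/2048))*s^4
        + ((1155*A + 2240*B - 105*c3)*(π/131072))*s^6
        + (B*(1155/131072)*π)*s^8|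
        = |(A + B*s^2) * ((1/2 + 3/64*s^2 + 35/2048*s^4 + 1155/131072*s^6)*π - Gs)
          + c3 * ((1/2 - 1/64*s^2 - 5/2048*s^4 - 105/131072*s^6)*π - Fs)| := by rw [hid]
      _ ≤ |(A + B*s^2) * ((1/2 + 3/64*s^2 + 35/2048*s^4 + 1155/131072*s^6)*π - Gs)|
          + |c3 * ((1/2 - 1/64*s^2 - 5/2048*s^4 - 105/131072*s^6)*π - Fs)| := abs_add_le _ _
      _ = |A + B*s^2| * |(1/2 + 3/64*s^2 + 35/2048*s^4 + 1155/131072*s^6)*π - Gs|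
          + |c3| * |(1/2 - 1/64*s^2 - 5/2048*s^4 - 105/131072*s^6)*π - Fs| := by
            rw [abs_mul, abs_mul]
      _ ≤ (|A| + |B|) * (7*s^7) + |c3| * (4*s^7) := by
            gcongr
      _ = M * s^7 := by rw [hM]; ring
  obtain ⟨hK0, hK1, hK2, hK3⟩ := coeffs_zero _ _ _ _ _ M hM0 key
  have hpi2 : (π/2) ≠ 0 := by positivity
  have q0 : A + c2 + c3 = 0 := by
    rcases mul_eq_zero.mp hK0 with h | h
    · exact h
    · exact absurd h hpi2
  have q1 : 3*A + 32*B - c3 = 0 := by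
    rcases mul_eq_zero.mp hK1 with h | h
    · exact h
    · exact absurd h (by positivity)
  have q2 : 35*A + 96*B - 5*c3 = 0 := by
    rcases mul_eq_zero.mp hK2 with h | h
    · exact h
    · exact absurd h (by positivity)
  have q3 : 1155*A + 2240*B - 105*c3 = 0 := by
    rcases mul_eq_zero.mp hK3 with h | h
    · exact h
    · exact absurd h (by positivity)
  have hAB : A = 0 ∧ B = 0 ∧ c3 = 0 := by
    refine ⟨?_, ?_, ?_⟩ <;> linarith
  obtain ⟨ha, hb, h3⟩ := hAB
  rw [hA] at ha
  rw [hB] at hb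
  refine ⟨by linarith, by linarith, by linarith, h3⟩
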